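/- Fix y ∈ ℝ³ with |y| = 1. The six 3×3 matrices y⊗e₁, y⊗e₂, y⊗e₃, e₁⊗y, e₂⊗y, e₃⊗y (where (a⊗b)ᵢⱼ = aᵢbⱼ and e₁,e₂,e₃ is the standard basis) are null directions of the quadratic form g_y(ζ) := α_H ⟨Ψ_y, ζ⟩² - α_K y·(cof ζ)y, i.e., each lies in the kernel of the associated symmetric bilinear form, for all α_H, α_K ∈ ℝ. -/
import Mathlib


open Matrix

/-- The Levi-Civita permutation symbol on `Fin 3`. -/
noncomputable def eps (i j k : Fin 3) : ℝ :=
  Matrix.det (Matrix.of ![(Pi.single i 1 : Fin 3 → ℝ), Pi.single j 1, Pi.single k 1])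

/-- The cofactor matrix of a 3×3 matrix: the transpose of the adjugate. -/
noncomputable def cof (M : Matrix (Fin 3) (Fin 3) ℝ) : Matrix (Fin 3) (Fin 3) ℝ :=
  M.adjugateᵀ

/-- The pairing `⟨Ψ_y, ζ⟩ = Σ_{i,j,k} ε_{ijk} y_k ζ_{ij}`. -/
noncomputable def Psi (y : Fin 3 → ℝ) (ζ : Matrix (Fin 3) (Fin 3) ℝ) : ℝ :=
  ∑ i, ∑ j, ∑ k, eps i j k * y k * ζ i j

/-- Squared Frobenius norm of a 3×3 matrix. -/
noncomputable def frobSq (ζ : Matrix (Fin 3) (Fin 3) ℝ) : ℝ :=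
  ∑ i, ∑ j, (ζ i j) ^ 2

/-- Frobenius inner product of 3×3 matrices. -/
noncomputable def frobInner (A B : Matrix (Fin 3) (Fin 3) ℝ) : ℝ :=
  ∑ i, ∑ j, A i j * B i j

/-- The quadratic form `g_y(ζ) = α_H ⟨Ψ_y,ζ⟩² − α_K y·(cof ζ)y`. -/
noncomputable def gQF (αH αK : ℝ) (y : Fin 3 → ℝ) (ζ : Matrix (Fin 3) (Fin 3) ℝ) : ℝ :=
  αH * (Psi y ζ) ^ 2 - αK * (y ⬝ᵥ (cof ζ).mulVec y)

/-- The symmetric bilinear form obtained by polarizing `g_y`. -/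
noncomputable def gBilin (αH αK : ℝ) (y : Fin 3 → ℝ)
    (A B : Matrix (Fin 3) (Fin 3) ℝ) : ℝ :=
  (gQF αH αK y (A + B) - gQF αH αK y A - gQF αH αK y B) / 2

set_option maxHeartbeats 1000000 in
lemma Psi_eq (y : Fin 3 → ℝ) (ζ : Matrix (Fin 3) (Fin 3) ℝ) :
    Psi y ζ = y 0 * (ζ 1 2 - ζ 2 1) + y 1 * (ζ 2 0 - ζ 0 2) + y 2 * (ζ 0 1 - ζ 1 0) := by
  simp [Psi, eps, Fin.sum_univ_three, Matrix.det_fin_three, Pi.single_apply]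
  ring

set_option maxHeartbeats 1000000 in
lemma cof_quad_eq (y : Fin 3 → ℝ) (M : Matrix (Fin 3) (Fin 3) ℝ) :
    y ⬝ᵥ (cof M).mulVec y =
      y 0 * ((M 1 1 * M 2 2 - M 1 2 * M 2 1) * y 0
        + (M 1 2 * M 2 0 - M 1 0 * M 2 2) * y 1
        + (M 1 0 * M 2 1 - M 1 1 * M 2 0) * y 2)
      + y 1 * ((M 2 1 * M 0 2 - M 2 2 * M 0 1) * y 0
        + (M 2 2 * M 0 0 - M 2 0 * M 0 2) * y 1
        + (M 2 0 * M 0 1 - M 2 1 * M 0 0) * y 2)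
      + y 2 * ((M 0 1 * M 1 2 - M 0 2 * M 1 1) * y 0
        + (M 0 2 * M 1 0 - M 0 0 * M 1 2) * y 1
        + (M 0 0 * M 1 1 - M 0 1 * M 1 0) * y 2) := by
  simp [cof, Matrix.adjugate_fin_three, dotProduct, Matrix.mulVec,
    Fin.sum_univ_three]
  ring

set_option maxHeartbeats 2000000 in
theorem outer_products_are_null_directions
    (αH αK : ℝ) (y : Fin 3 → ℝ) (hy : y ⬝ᵥ y = 1) :
    ∀ (i : Fin 3) (ζ : Matrix (Fin 3) (Fin 3) ℝ),
      gBilin αH αK y (Matrix.vecMulVec y (Pi.single i 1)) ζ = 0 ∧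
      gBilin αH αK y (Matrix.vecMulVec (Pi.single i 1) y) ζ = 0 := by
  intro i ζ
  fin_cases i <;> constructor <;>
  · show (gQF αH αK y (_ + ζ) - gQF αH αK y _ - gQF αH αK y ζ) / 2 = 0
    simp only [gQF, Psi_eq, cof_quad_eq]
    simp [Matrix.add_apply, Matrix.vecMulVec_apply, Pi.single_apply]
    ring
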